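/- arXiv:2304.11341 — 2 statements merged into one kernel-verified Lean document; each statement's English description precedes it below -/
import Mathlib

section
/- For μ, α, φ > 0 with μα > φ, the probability density f(x) = (φ μ^{φ/α} x^{φ−1} / (S₀^φ ĥ_f^φ Γ(μ))) · Γ((αμ−φ)/α, μx^α/(S₀^α ĥ_f^α)) on x > 0 integrates to 1, i.e., ∫₀^∞ f(x) dx = 1. -/
/-!
The substitution `y = b x^α` with `b = μ / (S₀ ĥ_f)^α` turns the integral into the Mellin
transform `∫₀^∞ y^(s-1) Γ(a, y) dy` at `s = φ/α`, `a = (αμ - φ)/α`. Since `Γ(a, y)` is the tail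
`ν (y, ∞)` of the measure `ν = t^(a-1) e^(-t) dt` on `(0, ∞)`, the layer-cake formula gives
`∫₀^∞ y^(s-1) ν (y, ∞) dy = ∫ t^s / s dν(t) = Γ(a + s) / s`, and `a + s = μ` cancels `Γ(μ)`.
-/

open Real MeasureTheory Set

theorem integral_rpow_mul_comp_rpow_Ioi (F : ℝ → ℝ) {α : ℝ} (hα : 0 < α) (φ : ℝ) :
    ∫ x in Ioi 0, x ^ (φ - 1) * F (x ^ α) = α⁻¹ * ∫ y in Ioi 0, y ^ (φ / α - 1) * F y := by
  rw [← integral_comp_rpow_Ioi_of_pos (g := fun y => y ^ (φ / α - 1) * F y) hα,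
    ← integral_const_mul]
  refine setIntegral_congr_fun measurableSet_Ioi fun x (hx : 0 < x) => ?_
  have hpow : x ^ (α - 1) * (x ^ α) ^ (φ / α - 1) = x ^ (φ - 1) := by
    rw [← rpow_mul hx.le, ← rpow_add hx]
    congr 1
    field_simp
    ring
  rw [smul_eq_mul, ← hpow]
  field_simp

theorem integral_rpow_mul_comp_mul_left_Ioi (F : ℝ → ℝ) {b : ℝ} (hb : 0 < b) (s : ℝ) :
    ∫ y in Ioi 0, y ^ (s - 1) * F (b * y) = b ^ (-s) * ∫ y in Ioi 0, y ^ (s - 1) * F y := by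
  have hscale : ∀ y ∈ Ioi (0 : ℝ),
      y ^ (s - 1) * F (b * y) = b ^ (1 - s) * ((b * y) ^ (s - 1) * F (b * y)) := by
    intro y hy
    rw [mul_rpow hb.le (le_of_lt hy), ← mul_assoc, ← mul_assoc, ← rpow_add hb]
    simp
  rw [setIntegral_congr_fun measurableSet_Ioi hscale, integral_const_mul,
    integral_comp_mul_left_Ioi (fun y => y ^ (s - 1) * F y) 0 hb, mul_zero, smul_eq_mul,
    ← mul_assoc, ← rpow_neg_one, ← rpow_add hb]
  ring_nf

theorem integral_rpow_mul_comp_mul_rpow_Ioi (F : ℝ → ℝ) {α b : ℝ} (hα : 0 < α) (hb : 0 < b)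
    (φ : ℝ) :
    ∫ x in Ioi 0, x ^ (φ - 1) * F (b * x ^ α)
      = α⁻¹ * b ^ (-(φ / α)) * ∫ y in Ioi 0, y ^ (φ / α - 1) * F y := by
  rw [integral_rpow_mul_comp_rpow_Ioi (fun y => F (b * y)) hα,
    integral_rpow_mul_comp_mul_left_Ioi F hb, mul_assoc]

noncomputable def upperIncGamma (a x : ℝ) : ℝ := ∫ t in Ioi x, t ^ (a - 1) * exp (-t)

noncomputable def gammaIntegrandMeasure (a : ℝ) : Measure ℝ :=
  (volume.restrict (Ioi 0)).withDensity fun t => ENNReal.ofReal (t ^ (a - 1) * exp (-t))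

theorem integrableOn_rpow_mul_exp_neg_Ioi {a : ℝ} (ha : 0 < a) :
    IntegrableOn (fun t : ℝ => t ^ (a - 1) * exp (-t)) (Ioi 0) := by
  simpa only [mul_comm] using GammaIntegral_convergent ha

theorem upperIncGamma_nonneg (a : ℝ) {x : ℝ} (hx : 0 ≤ x) : 0 ≤ upperIncGamma a x :=
  setIntegral_nonneg measurableSet_Ioi fun _ ht =>
    mul_nonneg (rpow_nonneg (hx.trans (le_of_lt ht)) _) (exp_pos _).le

theorem antitoneOn_upperIncGamma {a : ℝ} (ha : 0 < a) : AntitoneOn (upperIncGamma a) (Ici 0) :=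
  fun _ hx _ _ hxy => setIntegral_mono_set
    ((integrableOn_rpow_mul_exp_neg_Ioi ha).mono_set (Ioi_subset_Ioi hx))
    (ae_restrict_of_forall_mem measurableSet_Ioi fun _ ht =>
      mul_nonneg (rpow_nonneg (le_trans hx (le_of_lt ht)) _) (exp_pos _).le)
    (Ioi_subset_Ioi hxy).eventuallyLE

theorem gammaIntegrandMeasure_Ioi {a x : ℝ} (ha : 0 < a) (hx : 0 ≤ x) :
    gammaIntegrandMeasure a (Ioi x) = ENNReal.ofReal (upperIncGamma a x) := by
  rw [gammaIntegrandMeasure, withDensity_apply _ measurableSet_Ioi,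
    Measure.restrict_restrict measurableSet_Ioi, Ioi_inter_Ioi, max_eq_left hx, upperIncGamma,
    ofReal_integral_eq_lintegral_ofReal
      ((integrableOn_rpow_mul_exp_neg_Ioi ha).mono_set (Ioi_subset_Ioi hx))
      (ae_restrict_of_forall_mem measurableSet_Ioi fun _ ht =>
        mul_nonneg (rpow_nonneg (le_trans hx (le_of_lt ht)) _) (exp_pos _).le)]

theorem lintegral_integral_rpow_gammaIntegrandMeasure {a s : ℝ} (hs : 0 < s) (has : 0 < a + s) :
    ∫⁻ ω, ENNReal.ofReal (∫ x in (0)..ω, x ^ (s - 1)) ∂gammaIntegrandMeasure a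
      = ENNReal.ofReal (Gamma (a + s) / s) := by
  have hint : IntegrableOn (fun t => exp (-t) * t ^ (a + s - 1) / s) (Ioi 0) :=
    (GammaIntegral_convergent has).div_const s
  rw [gammaIntegrandMeasure, lintegral_withDensity_eq_lintegral_mul_non_measurable _
      (by fun_prop) (ae_of_all _ fun _ => ENNReal.ofReal_lt_top),
    Gamma_eq_integral has, ← integral_div,
    ofReal_integral_eq_lintegral_ofReal hint (ae_restrict_of_forall_mem measurableSet_Ioi
      fun _ ht => div_nonneg (mul_nonneg (exp_pos _).le (rpow_nonneg (le_of_lt ht) _)) hs.le)]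
  refine setLIntegral_congr_fun measurableSet_Ioi fun t (ht : 0 < t) => ?_
  rw [Pi.mul_apply, ← ENNReal.ofReal_mul (mul_nonneg (rpow_nonneg ht.le _) (exp_pos _).le),
    integral_rpow (Or.inl (by linarith)), sub_add_cancel, zero_rpow hs.ne', sub_zero]
  congr 1
  rw [show a + s - 1 = (a - 1) + s by ring, rpow_add ht]
  ring

theorem integral_rpow_mul_upperIncGamma {a s : ℝ} (ha : 0 < a) (hs : 0 < s) :
    ∫ x in Ioi 0, x ^ (s - 1) * upperIncGamma a x = Gamma (a + s) / s := by
  have hlayer := lintegral_comp_eq_lintegral_meas_lt_mul (gammaIntegrandMeasure a) (f := id)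
    (g := fun x => x ^ (s - 1))
    ((withDensity_absolutelyContinuous _ _).ae_le
      (ae_restrict_of_forall_mem measurableSet_Ioi fun _ ht => le_of_lt ht))
    aemeasurable_id (fun _ _ => intervalIntegral.intervalIntegrable_rpow' (by linarith))
    (ae_restrict_of_forall_mem measurableSet_Ioi fun _ ht => rpow_nonneg (le_of_lt ht) _)
  simp only [id_eq] at hlayer
  rw [lintegral_integral_rpow_gammaIntegrandMeasure hs (add_pos ha hs),
    setLIntegral_congr_fun measurableSet_Ioi fun x (hx : 0 < x) => by
      rw [show {ω | x < ω} = Ioi x from rfl, gammaIntegrandMeasure_Ioi ha hx.le,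
        ← ENNReal.ofReal_mul (upperIncGamma_nonneg a hx.le), mul_comm]] at hlayer
  rw [integral_eq_lintegral_of_nonneg_ae, ← hlayer, ENNReal.toReal_ofReal]
  · exact div_nonneg (Gamma_pos_of_pos (add_pos ha hs)).le hs.le
  · exact ae_restrict_of_forall_mem measurableSet_Ioi fun x hx =>
      mul_nonneg (rpow_nonneg (le_of_lt hx) _) (upperIncGamma_nonneg a (le_of_lt hx))
  · exact ((measurable_id.pow_const _).aemeasurable.mul
      (aemeasurable_restrict_of_antitoneOn measurableSet_Ioi
        ((antitoneOn_upperIncGamma ha).mono Ioi_subset_Ici_self))).aestronglyMeasurable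

theorem integral_rpow_mul_upperIncGamma_mul_rpow {a b α φ : ℝ} (ha : 0 < a) (hb : 0 < b)
    (hα : 0 < α) (hφ : 0 < φ) :
    ∫ x in Ioi 0, x ^ (φ - 1) * upperIncGamma a (b * x ^ α)
      = b ^ (-(φ / α)) * Gamma (a + φ / α) / φ := by
  rw [integral_rpow_mul_comp_mul_rpow_Ioi (upperIncGamma a) hα hb,
    integral_rpow_mul_upperIncGamma ha (div_pos hφ hα)]
  field_simp

/-- The compound pointing-error/α-μ-fading PDF
`f(x) = (φ μ^{φ/α} x^{φ-1} / (S₀^φ ĥ_f^φ Γ(μ))) Γ((αμ-φ)/α, μ x^α/(S₀^α ĥ_f^α))`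
on `x > 0` integrates to one, where `Γ(a, y) = ∫_y^∞ t^{a-1} e^{-t} dt`. -/
theorem alpha_mu_pointing_error_pdf_integral_eq_one
    (α μ φ S₀ hf : ℝ)
    (hα : 0 < α) (hμ : 0 < μ) (hφ : 0 < φ) (hS₀ : 0 < S₀) (hhf : 0 < hf)
    (hmaf : φ < μ * α) :
    ∫ x in Ioi (0 : ℝ),
        (φ * μ ^ (φ / α) * x ^ (φ - 1) / (S₀ ^ φ * hf ^ φ * Real.Gamma μ)) *
          (∫ t in Ioi (μ * x ^ α / (S₀ ^ α * hf ^ α)),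
              t ^ ((α * μ - φ) / α - 1) * Real.exp (-t))
      = 1 := by
  have ha : 0 < (α * μ - φ) / α := div_pos (by linarith) hα
  have hb : 0 < μ / (S₀ ^ α * hf ^ α) := by positivity
  have hsum : (α * μ - φ) / α + φ / α = μ := by field_simp; ring
  have hscale : (μ / (S₀ ^ α * hf ^ α)) ^ (-(φ / α)) = S₀ ^ φ * hf ^ φ / μ ^ (φ / α) := by
    rw [rpow_neg hb.le, div_rpow hμ.le (by positivity), mul_rpow (by positivity) (by positivity),
      ← rpow_mul hS₀.le, ← rpow_mul hhf.le, mul_div_cancel₀ φ hα.ne', inv_div]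
  calc _ = φ * μ ^ (φ / α) / (S₀ ^ φ * hf ^ φ * Gamma μ) *
        ∫ x in Ioi 0, x ^ (φ - 1) *
          upperIncGamma ((α * μ - φ) / α) (μ / (S₀ ^ α * hf ^ α) * x ^ α) := by
        rw [← integral_const_mul]
        congr 1 with x
        rw [upperIncGamma, mul_div_right_comm μ]
        ring
    _ = 1 := by
      rw [integral_rpow_mul_upperIncGamma_mul_rpow ha hb hα hφ, hsum, hscale]
      have hΓ := Gamma_pos_of_pos hμ
      field_simp
end

section
/- Let X₁,…,X_K be i.i.d. nonnegative random variables whose common CDF satisfies F(x) = Pr{X ≤ x} ~ c·x^{d} as x → 0⁺ for constants c > 0, d > 0. Then for fixed R > 0, the HARQ-IR outage probability Pr{∏_{k=1}^K (1 + ρ̂ X_k) < 2^R} decays like ρ̂^{−Kd} as ρ̂ → ∞, i.e., −lim_{ρ̂→∞} log Pr{∏(1+ρ̂X_k) < 2^R}/log ρ̂ = K·d. -/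
/-!
With `a = 2^R - 1` and `0 < b < 2^{R/K} - 1`, the outage event contains `{∀ k, X k ≤ b/ρ}` and is
contained in `{∀ k, X k ≤ a/ρ}`, since every factor `1 + ρ X k` is at least `1`. By independence
both events have probability `F(t/ρ)^K`, and `F(x) ~ c x^d` gives `log F(t/ρ) / log ρ → -d` for every
`t > 0`, so both bounds have exponent `-K d`.
-/

open MeasureTheory ProbabilityTheory Set Filter Topology Real

section Asymptotics

variable {F : ℝ → ℝ} {c d : ℝ}

lemma eventually_pos_of_tendsto_div_rpow (hc : 0 < c)
    (hF : Tendsto (fun x => F x / x ^ d) (𝓝[>] 0) (𝓝 c)) : ∀ᶠ x in 𝓝[>] 0, 0 < F x := by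
  filter_upwards [hF.eventually (eventually_gt_nhds hc), self_mem_nhdsWithin] with x hFx hx
  exact (div_pos_iff_of_pos_right (rpow_pos_of_pos hx d)).1 hFx

lemma tendsto_log_div_log_of_tendsto_div_rpow (hc : 0 < c)
    (hF : Tendsto (fun x => F x / x ^ d) (𝓝[>] 0) (𝓝 c)) :
    Tendsto (fun x => log (F x) / log x) (𝓝[>] 0) (𝓝 d) := by
  have hratio : Tendsto (fun x => log (F x / x ^ d) / log x + d) (𝓝[>] 0) (𝓝 d) := by
    simpa using ((hF.log hc.ne').div_atBot tendsto_log_nhdsGT_zero).add_const d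
  refine hratio.congr' ?_
  filter_upwards [eventually_pos_of_tendsto_div_rpow hc hF, Ioo_mem_nhdsGT one_pos]
    with x hFx ⟨hx, hx1⟩
  have hlog : log x ≠ 0 := (log_neg hx hx1).ne
  rw [log_div hFx.ne' (rpow_pos_of_pos hx d).ne', log_rpow hx]
  field_simp
  ring

lemma tendsto_log_div_div_log_atTop {t : ℝ} (ht : t ≠ 0) :
    Tendsto (fun ρ => log (t / ρ) / log ρ) atTop (𝓝 (-1)) := by
  have hlim : Tendsto (fun ρ => log t / log ρ - 1) atTop (𝓝 (-1)) := by
    simpa using (tendsto_const_nhds.div_atTop tendsto_log_atTop).sub_const 1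
  refine hlim.congr' ?_
  filter_upwards [eventually_gt_atTop 1] with ρ hρ
  have hlog : log ρ ≠ 0 := (log_pos hρ).ne'
  rw [log_div ht (by positivity)]
  field_simp

lemma tendsto_const_div_atTop_nhdsGT_zero {t : ℝ} (ht : 0 < t) :
    Tendsto (fun ρ => t / ρ) atTop (𝓝[>] 0) := by
  refine tendsto_nhdsWithin_of_tendsto_nhds_of_eventually_within _
    (tendsto_const_nhds.div_atTop tendsto_id) ?_
  filter_upwards [eventually_gt_atTop 0] with ρ hρ
  exact div_pos ht hρ

lemma tendsto_log_comp_div_div_log (hc : 0 < c)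
    (hF : Tendsto (fun x => F x / x ^ d) (𝓝[>] 0) (𝓝 c)) {t : ℝ} (ht : 0 < t) :
    Tendsto (fun ρ => log (F (t / ρ)) / log ρ) atTop (𝓝 (-d)) := by
  have hprod := ((tendsto_log_div_log_of_tendsto_div_rpow hc hF).comp
    (tendsto_const_div_atTop_nhdsGT_zero ht)).mul
    (tendsto_log_div_div_log_atTop ht.ne')
  rw [mul_neg_one] at hprod
  refine hprod.congr' ?_
  filter_upwards [eventually_gt_atTop t] with ρ hρ
  have hlog : log (t / ρ) ≠ 0 :=
    (log_neg (div_pos ht (ht.trans hρ)) ((div_lt_one (ht.trans hρ)).2 hρ)).ne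
  simp only [Function.comp_apply]
  field_simp

end Asymptotics

lemma tendsto_log_div_of_le_of_le {α : Type*} {l : Filter α} {f g h u : α → ℝ} {L : ℝ}
    (hu : ∀ᶠ a in l, 0 < u a) (hg_pos : ∀ᶠ a in l, 0 < g a)
    (hgf : ∀ᶠ a in l, g a ≤ f a) (hfh : ∀ᶠ a in l, f a ≤ h a)
    (hg : Tendsto (fun a => log (g a) / u a) l (𝓝 L))
    (hh : Tendsto (fun a => log (h a) / u a) l (𝓝 L)) :
    Tendsto (fun a => log (f a) / u a) l (𝓝 L) := by
  refine tendsto_of_tendsto_of_tendsto_of_le_of_le' hg hh ?_ ?_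
  · filter_upwards [hu, hg_pos, hgf] with a hua hga hgfa
    exact div_le_div_of_nonneg_right (log_le_log hga hgfa) hua.le
  · filter_upwards [hu, hg_pos, hgf, hfh] with a hua hga hgfa hfha
    exact div_le_div_of_nonneg_right (log_le_log (hga.trans_le hgfa) hfha) hua.le

section Products

variable {ι : Type*} [Fintype ι] {y : ι → ℝ}

lemma prod_one_add_lt_rpow_of_forall_le [Nonempty ι] (hy : ∀ i, 0 ≤ y i) {a b R : ℝ}
    (ha : 0 ≤ a) (hb : 1 + b < a ^ (R / Fintype.card ι)) (h : ∀ i, y i ≤ b) :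
    ∏ i, (1 + y i) < a ^ R := by
  have hcard : (Fintype.card ι : ℝ) ≠ 0 := Nat.cast_ne_zero.2 Fintype.card_ne_zero
  calc ∏ i, (1 + y i) < ∏ _i : ι, a ^ (R / Fintype.card ι) :=
        Finset.prod_lt_prod_of_nonempty (fun i _ => by linarith [hy i])
          (fun i _ => by linarith [h i]) Finset.univ_nonempty
    _ = a ^ R := by
        rw [Finset.prod_const, Finset.card_univ, ← rpow_natCast, ← rpow_mul ha,
          div_mul_cancel₀ R hcard]

lemma lt_sub_one_of_prod_one_add_lt (hy : ∀ i, 0 ≤ y i) {T : ℝ} (h : ∏ i, (1 + y i) < T)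
    (j : ι) : y j < T - 1 := by
  have hj : ∏ i ∈ {j}, (1 + y i) ≤ ∏ i, (1 + y i) :=
    Finset.prod_le_prod_of_subset_of_one_le (Finset.subset_univ _)
      (fun i _ => by linarith [hy i]) (fun i _ _ => by linarith [hy i])
  rw [Finset.prod_singleton] at hj
  linarith

end Products

lemma ProbabilityTheory.iIndepFun.toReal_measure_forall_le {Ω ι : Type*} [MeasurableSpace Ω]
    [Fintype ι] {μ : Measure Ω} {X : ι → Ω → ℝ} {F : ℝ → ℝ} (hindep : iIndepFun X μ)
    (hcdf : ∀ k x, (μ {ω | X k ω ≤ x}).toReal = F x) (t : ℝ) :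
    (μ {ω | ∀ k, X k ω ≤ t}).toReal = F t ^ Fintype.card ι := by
  have h := hindep.meas_iInter (s := fun k => {ω | X k ω ≤ t})
    (fun k => ⟨Iic t, measurableSet_Iic, rfl⟩)
  rw [ofPred_forall, h, ENNReal.toReal_prod]
  simp [hcdf]

theorem harq_ir_diversity_order_general
    {Ω : Type*} [MeasurableSpace Ω] (μ : Measure Ω) [IsProbabilityMeasure μ]
    (K : ℕ) (hK : 1 ≤ K) (X : Fin K → Ω → ℝ)
    (F : ℝ → ℝ) (c d R : ℝ) (hc : 0 < c) (hR : 0 < R)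
    (hindep : iIndepFun X μ)
    (hXnn : ∀ k ω, 0 ≤ X k ω)
    (hcdf : ∀ k x, (μ {ω | X k ω ≤ x}).toReal = F x)
    (hF : Tendsto (fun x => F x / x ^ d) (nhdsWithin 0 (Ioi 0)) (nhds c)) :
    Tendsto
      (fun ρ => Real.log ((μ {ω | ∏ k, (1 + ρ * X k ω) < (2 : ℝ) ^ R}).toReal)
        / Real.log ρ)
      atTop (nhds (-((K : ℝ) * d))) := by
  have : Nonempty (Fin K) := ⟨⟨0, hK⟩⟩
  have hprob (t : ℝ) : (μ {ω | ∀ k, X k ω ≤ t}).toReal = F t ^ K := by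
    rw [hindep.toReal_measure_forall_le hcdf, Fintype.card_fin]
  have hlim {t : ℝ} (ht : 0 < t) :
      Tendsto (fun ρ => log (F (t / ρ) ^ K) / log ρ) atTop (𝓝 (-(K * d))) := by
    simpa [log_pow, mul_div_assoc] using (tendsto_log_comp_div_div_log hc hF ht).const_mul (K : ℝ)
  set a : ℝ := 2 ^ R - 1
  set b : ℝ := ((2 : ℝ) ^ (R / K) - 1) / 2 with hb_def
  have ha : 0 < a := by linarith [one_lt_rpow one_lt_two hR]
  have hroot : (1 : ℝ) < 2 ^ (R / K) := one_lt_rpow one_lt_two (div_pos hR (Nat.cast_pos.2 hK))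
  have hb : 0 < b := by rw [hb_def]; linarith
  have hb_root : 1 + b < 2 ^ (R / K) := by rw [hb_def]; linarith
  refine tendsto_log_div_of_le_of_le (g := fun ρ => F (b / ρ) ^ K) (h := fun ρ => F (a / ρ) ^ K)
    ?_ ?_ ?_ ?_ (hlim hb) (hlim ha)
  · filter_upwards [eventually_gt_atTop 1] with ρ hρ using log_pos hρ
  · filter_upwards [(tendsto_const_div_atTop_nhdsGT_zero hb).eventually
      (eventually_pos_of_tendsto_div_rpow hc hF)] with ρ hρ using pow_pos hρ K
  · filter_upwards [eventually_gt_atTop 0] with ρ hρ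
    rw [← hprob]
    refine ENNReal.toReal_mono (measure_ne_top μ _) (measure_mono fun ω hω => ?_)
    exact prod_one_add_lt_rpow_of_forall_le (fun k => mul_nonneg hρ.le (hXnn k ω)) zero_le_two
      (by rwa [Fintype.card_fin]) fun k => (le_div_iff₀' hρ).1 (hω k)
  · filter_upwards [eventually_gt_atTop 0] with ρ hρ
    rw [← hprob]
    refine ENNReal.toReal_mono (measure_ne_top μ _) (measure_mono fun ω hω k => ?_)
    exact (le_div_iff₀' hρ).2
      (lt_sub_one_of_prod_one_add_lt (fun k => mul_nonneg hρ.le (hXnn k ω)) hω k).le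

/-- Diversity order of HARQ-IR: for i.i.d. nonnegative gains with common CDF
`F(x) ~ c x^d` as `x → 0⁺`, the outage probability
`Pr{∏ (1 + ρ̂ X_k) < 2^R}` satisfies
`-lim_{ρ̂→∞} log Pr{⋯} / log ρ̂ = K d`. -/
theorem harq_ir_diversity_order
    {Ω : Type*} [MeasurableSpace Ω] (μ : Measure Ω) [IsProbabilityMeasure μ]
    (K : ℕ) (hK : 1 ≤ K) (X : Fin K → Ω → ℝ)
    (F : ℝ → ℝ) (c d R : ℝ) (hc : 0 < c) (hd : 0 < d) (hR : 0 < R)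
    (hmeas : ∀ k, Measurable (X k))
    (hindep : iIndepFun X μ)
    (hXnn : ∀ k ω, 0 ≤ X k ω)
    (hcdf : ∀ k x, (μ {ω | X k ω ≤ x}).toReal = F x)
    (hF : Tendsto (fun x => F x / x ^ d) (nhdsWithin 0 (Ioi 0)) (nhds c)) :
    Tendsto
      (fun ρ => Real.log ((μ {ω | ∏ k, (1 + ρ * X k ω) < (2 : ℝ) ^ R}).toReal)
        / Real.log ρ)
      atTop (nhds (-((K : ℝ) * d))) :=
  harq_ir_diversity_order_general μ K hK X F c d R hc hR hindep hXnn hcdf hF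
end
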